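/- Let Ω ⊆ ℝⁿ be open and u ∈ C¹(Ω) a viscosity subsolution of Du ⊗ Du : D²u ≥ 0 on Ω. Then for every bounded open Ω' with closure in Ω and every affine function A of the form A(z) = a + ξ (X Du(x)) · z with a ∈ ℝ, ξ ≥ 0, x ∈ closure(Ω') satisfying |Du(x)| = sup_{Ω'}|Du|, and X ∈ D^{2,+}u(x), one has ‖Du‖_{L^∞(Ω')} ≤ ‖Du + DA‖_{L^∞(Ω')}. -/

import Mathlib

open scoped BigOperators

/-- The gradient vector `Du(x) ∈ ℝⁿ` of a scalar function `u : ℝⁿ → ℝ`. -/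
noncomputable def gradv {n : ℕ} (u : (Fin n → ℝ) → ℝ) (x : Fin n → ℝ) : Fin n → ℝ :=
  fun i => fderiv ℝ u x (Pi.single i 1)

/-- The Euclidean norm of a vector in `ℝⁿ`. -/
noncomputable def gnorm {n : ℕ} (z : Fin n → ℝ) : ℝ :=
  Real.sqrt (∑ i, (z i) ^ 2)

/-- The feeble second-order superderivatives `D^{2,+}u(x)`: symmetric matrices `X` with
`Du(x) ≠ 0` and `u(x+z) ≤ u(x) + Du(x)·z + ½ X : z ⊗ z + o(|z|²)` as `z → 0`. -/
def D2plus {n : ℕ} (u : (Fin n → ℝ) → ℝ) (x : Fin n → ℝ) :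
    Set (Matrix (Fin n) (Fin n) ℝ) :=
  {X | X.IsSymm ∧ gradv u x ≠ 0 ∧
    ∀ ε : ℝ, 0 < ε → ∃ δ : ℝ, 0 < δ ∧ ∀ z : Fin n → ℝ, gnorm z < δ →
      u (x + z) ≤ u x + (∑ i, gradv u x i * z i)
        + (1 / 2) * (∑ i, ∑ j, X i j * z i * z j) + ε * (gnorm z) ^ 2}

/-- The `L^∞` norm `‖Du‖_{L^∞(S)}` of the gradient over a set `S`. -/
noncomputable def supDu {n : ℕ} (u : (Fin n → ℝ) → ℝ) (S : Set (Fin n → ℝ)) : ℝ :=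
  sSup ((fun y => gnorm (gradv u y)) '' S)

/-!
Let `p = Du(x)` and `v = ξ X p`. The subsolution property at `x` gives `p · v = ξ X : p ⊗ p ≥ 0`,
so `|p + v| ≥ |p| = ‖Du‖_{L^∞(Ω')}`. Since `Du` is continuous on the compact set `closure Ω'`
and `x ∈ closure Ω'`, the value `|Du(x) + v|` is bounded by `sup_{Ω'} |Du + v|`.
-/

lemma continuous_gnorm {n : ℕ} : Continuous (gnorm : (Fin n → ℝ) → ℝ) :=
  Real.continuous_sqrt.comp (continuous_finsetSum _ fun i _ => (continuous_apply i).pow 2)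

lemma gnorm_le_gnorm_add_of_dotProduct_nonneg {n : ℕ} {p v : Fin n → ℝ} (h : 0 ≤ p ⬝ᵥ v) :
    gnorm p ≤ gnorm (p + v) := by
  apply Real.sqrt_le_sqrt
  have hexpand : ∑ i, (p + v) i ^ 2 = ∑ i, p i ^ 2 + 2 * (p ⬝ᵥ v) + ∑ i, v i ^ 2 := by
    simp only [Pi.add_apply, add_sq, Finset.sum_add_distrib, dotProduct, Finset.mul_sum, mul_assoc]
  have hv : 0 ≤ ∑ i, v i ^ 2 := Finset.sum_nonneg fun i _ => sq_nonneg _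
  linarith

lemma dotProduct_smul_mulVec {n : ℕ} (p : Fin n → ℝ) (ξ : ℝ) (X : Matrix (Fin n) (Fin n) ℝ) :
    p ⬝ᵥ (ξ • X.mulVec p) = ξ * ∑ i, ∑ j, X i j * (p i * p j) := by
  rw [dotProduct_smul, smul_eq_mul]
  congr 1
  simp only [dotProduct, Matrix.mulVec, Finset.mul_sum]
  exact Finset.sum_congr rfl fun i _ => Finset.sum_congr rfl fun j _ => by ring

lemma continuousOn_gradv {n : ℕ} {Ω : Set (Fin n → ℝ)} {u : (Fin n → ℝ) → ℝ}
    (hΩ : IsOpen Ω) (hu : ContDiffOn ℝ 1 u Ω) : ContinuousOn (gradv u) Ω :=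
  continuousOn_pi.2 fun i =>
    (ContinuousLinearMap.apply ℝ ℝ (Pi.single i 1 : Fin n → ℝ)).continuous.comp_continuousOn
      (hu.continuousOn_fderiv_of_isOpen hΩ le_rfl)

lemma le_csSup_image_of_mem_closure {α β : Type*} [TopologicalSpace α]
    [ConditionallyCompleteLinearOrder β] [TopologicalSpace β] [OrderTopology β] {S : Set α} {f : α → β}
    (hf : ContinuousOn f (closure S)) (hS : IsCompact (closure S)) {x : α} (hx : x ∈ closure S) :
    f x ≤ sSup (f '' S) := by
  have hbdd : BddAbove (f '' S) :=
    (hS.image_of_continuousOn hf).bddAbove.mono (Set.image_mono subset_closure)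
  exact closure_minimal (fun y hy => le_csSup hbdd hy) isClosed_Iic (hf.image_closure ⟨x, hx, rfl⟩)

/-- Theorem 4.1, converse direction: if `u ∈ C¹(Ω)` is a viscosity
subsolution of `Du ⊗ Du : D²u ≥ 0` on `Ω`, then for every `Ω' ⋐ Ω` and every affine
`A(z) = a + ξ (X Du(x)) · z` with `ξ ≥ 0`, `x ∈ Ω'(u)` and `X ∈ D^{2,+}u(x)`,
`‖Du‖_{L^∞(Ω')} ≤ ‖Du + DA‖_{L^∞(Ω')}`. -/
theorem stmt9 {n : ℕ} (Ω : Set (Fin n → ℝ)) (hΩ : IsOpen Ω)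
    (u : (Fin n → ℝ) → ℝ) (hu : ContDiffOn ℝ 1 u Ω)
    (hsub : ∀ x ∈ Ω, ∀ X ∈ D2plus u x,
      0 ≤ ∑ i, ∑ j, X i j * (gradv u x i * gradv u x j)) :
    ∀ Ω' : Set (Fin n → ℝ), IsOpen Ω' → Bornology.IsBounded Ω' → closure Ω' ⊆ Ω →
      ∀ x ∈ closure Ω', gnorm (gradv u x) = supDu u Ω' →
      ∀ X ∈ D2plus u x, ∀ ξ : ℝ, 0 ≤ ξ → ∀ _a : ℝ,
        supDu u Ω' ≤
          sSup ((fun y => gnorm (gradv u y + ξ • X.mulVec (gradv u x))) '' Ω') := by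
  intro Ω' _ hΩ'bdd hΩ'sub x hx hxmax X hX ξ hξ _
  have hgrad : ContinuousOn (gradv u) (closure Ω') := (continuousOn_gradv hΩ hu).mono hΩ'sub
  rw [← hxmax]
  calc gnorm (gradv u x)
      ≤ gnorm (gradv u x + ξ • X.mulVec (gradv u x)) := by
        refine gnorm_le_gnorm_add_of_dotProduct_nonneg ?_
        rw [dotProduct_smul_mulVec]
        exact mul_nonneg hξ (hsub x (hΩ'sub hx) X hX)
    _ ≤ sSup ((fun y => gnorm (gradv u y + ξ • X.mulVec (gradv u x))) '' Ω') :=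
        le_csSup_image_of_mem_closure
          (continuous_gnorm.comp_continuousOn (hgrad.add continuousOn_const))
          hΩ'bdd.isCompact_closure hx
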